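/- arXiv:2008.07545 — 4 statements merged into one kernel-verified Lean document; each statement's English description precedes it below -/
import Mathlib

section
/- Consider a model f(X) = g_θ(W X) with dense first layer W ∈ ℝ^{k×d} and remaining parameters θ ∈ ℝ^p, trained by gradient descent with learning rate η > 0 on a loss ℓ(θ, Z) that is a differentiable function of θ and of the first-layer training activations Z = W X_train ∈ ℝ^{k×n} (the training labels Y_train being fixed inside ℓ). The updates are θ^{t+1} = θ^t − η ∇_θ ℓ(θ^t, Z^t) and W^{t+1} = W^t − η (∇_Z ℓ)(θ^t, Z^t) X_train^⊤, where ∇_Z denotes the gradient with respect to Z in the Frobenius inner product, and Z^t := W^t X_train. Then for two training sets X_train, X'_train ∈ ℝ^{d×n} with equal Gram matrices X_train^⊤ X_train = X'_train^⊤ X'_train, and two initializations (θ^0, W^0) and (θ^0, W'^0) with the same θ^0 and with equal initial activations W^0 X_train = W'^0 X'_train, the trajectories satisfy θ^t = θ'^t and W^t X_train = W'^t X'_train for all t ≥ 0. That is, the learned deeper-layer weights θ^t and first-layer training activations Z^t are determined by (θ^0, Z^0, K_train, Y_train) and are otherwise independent of X_train. -/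
open Matrix

attribute [local instance] Matrix.normedAddCommGroup Matrix.normedSpace

/-- Train a model `f(X) = g_θ(W X)` by gradient descent with learning
rate `η > 0` on a differentiable loss `ℓ (θ, Z)` of the deeper parameters `θ ∈ ℝ^p` and
the first-layer training activations `Z = W X_train ∈ ℝ^{k×n}`.  Here `Dθ θ Z` and
`DZ θ Z` denote the gradients of `ℓ` with respect to `θ` (in the Euclidean
inner product) and to `Z` (in the Frobenius inner product), characterized through the
Fréchet derivative.  The updates are
`θ^{t+1} = θ^t − η Dθ(θ^t, Z^t)` and `W^{t+1} = W^t − η (DZ(θ^t, Z^t)) X_trainᵀ`.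
If two training sets have equal Gram matrices `X_trainᵀ X_train = X'_trainᵀ X'_train`,
and the initializations share the same `θ^0` and the same initial activations
`W^0 X_train = W'^0 X'_train`, then `θ^t = θ'^t` and `W^t X_train = W'^t X'_train`
for all `t`. -/
theorem gd_trajectory_depends_on_data_only_through_gram
    (d n k p : ℕ) (η : ℝ) (hη : 0 < η)
    (ℓ : (Fin p → ℝ) → Matrix (Fin k) (Fin n) ℝ → ℝ)
    (hdiff : ∀ θ Z, Differentiable ℝ (fun θ' => ℓ θ' Z) ∧
      Differentiable ℝ (fun Z' => ℓ θ Z'))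
    -- `Dθ θ Z` is the gradient of `ℓ (·, Z)` at `θ` w.r.t. the Euclidean inner product
    (Dθ : (Fin p → ℝ) → Matrix (Fin k) (Fin n) ℝ → (Fin p → ℝ))
    (hDθ : ∀ θ Z v, fderiv ℝ (fun θ' => ℓ θ' Z) θ v = Dθ θ Z ⬝ᵥ v)
    -- `DZ θ Z` is the gradient of `ℓ (θ, ·)` at `Z` w.r.t. the Frobenius inner product
    (DZ : (Fin p → ℝ) → Matrix (Fin k) (Fin n) ℝ → Matrix (Fin k) (Fin n) ℝ)
    (hDZ : ∀ θ Z H, fderiv ℝ (fun Z' => ℓ θ Z') Z H = ((DZ θ Z)ᵀ * H).trace)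
    -- the two training sets, with equal Gram matrices
    (Xtr Xtr' : Matrix (Fin d) (Fin n) ℝ)
    (hGram : Xtrᵀ * Xtr = Xtr'ᵀ * Xtr')
    -- the two gradient-descent trajectories
    (θ θ' : ℕ → (Fin p → ℝ))
    (W W' : ℕ → Matrix (Fin k) (Fin d) ℝ)
    (hθ : ∀ t, θ (t + 1) = θ t - η • Dθ (θ t) (W t * Xtr))
    (hW : ∀ t, W (t + 1) = W t - η • (DZ (θ t) (W t * Xtr) * Xtrᵀ))
    (hθ' : ∀ t, θ' (t + 1) = θ' t - η • Dθ (θ' t) (W' t * Xtr'))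
    (hW' : ∀ t, W' (t + 1) = W' t - η • (DZ (θ' t) (W' t * Xtr') * Xtr'ᵀ))
    -- matching initializations: same deeper weights and same initial activations
    (hθ0 : θ 0 = θ' 0)
    (hZ0 : W 0 * Xtr = W' 0 * Xtr') :
    ∀ t, θ t = θ' t ∧ W t * Xtr = W' t * Xtr' := by
  intro t
  induction t with
  | zero => exact ⟨hθ0, hZ0⟩
  | succ t ih =>
    obtain ⟨h1, h2⟩ := ih
    constructor
    · rw [hθ, hθ', h1, h2]
    · rw [hW, hW', Matrix.sub_mul, Matrix.sub_mul, h2, Matrix.smul_mul, Matrix.smul_mul,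
        Matrix.mul_assoc, Matrix.mul_assoc, hGram, h1]
end

section
/- Consider the training procedure of a model f(X) = g_θ(W X) by gradient descent as follows: θ^{t+1} = θ^t − η ∇_θ ℓ(θ^t, W^t X_train) and W^{t+1} = W^t − η (∇_Z ℓ)(θ^t, W^t X_train) X_train^⊤, where ℓ(θ, Z) is a continuously differentiable loss depending on θ and the first-layer training activations (with fixed training labels absorbed into ℓ). Let W^0 be drawn from a probability measure μ on ℝ^{k×d} that is invariant under right-multiplication by every orthogonal matrix R ∈ ℝ^{d×d}, and let θ^0 be fixed. For a combined data matrix X = [X_train, X_test] ∈ ℝ^{d×(n_train+n_test)}, consider the random variable (θ^t, W^t X) (the deeper weights together with the combined train and test first-layer activations). Then for two combined datasets X, X' with X_train, X'_train of the same shape and equal combined Gram matrices X^⊤ X = X'^⊤ X', the law of (θ^t, W^t X) when training on X_train equals the law of (θ'^t, W'^t X') when training on X'_train, for every t ≥ 0. In particular, the distribution of the test predictions f^t_test = g_{θ^t}(W^t X_test) depends on the inputs only through the combined second moment matrix K = X^⊤ X and the training labels. -/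
open Matrix MeasureTheory

attribute [local instance] Matrix.normedAddCommGroup Matrix.normedSpace

instance matrixMeasurableSpace (m n : Type*) : MeasurableSpace (Matrix m n ℝ) :=
  inferInstanceAs (MeasurableSpace (m → n → ℝ))

/-!
Equal Gram matrices `Xᵀ X = X'ᵀ X'` mean `X' = R X` for an orthogonal `R`. Gradient descent
is equivariant under this change of coordinates: training on `X'_train` from `W₀ Rᵀ` gives the
same `θᵗ` and `W'ᵗ = Wᵗ Rᵀ` as training on `X_train` from `W₀`, hence the same activations
`W'ᵗ X' = Wᵗ X`. Isotropy says that `W₀ ↦ W₀ Rᵀ` preserves the law of `W₀`, so the laws agree.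
-/

theorem LinearMap.exists_linearIsometry_comp_eq_of_norm_map_eq {𝕜 M E : Type*} [RCLike 𝕜]
    [AddCommGroup M] [Module 𝕜 M] [NormedAddCommGroup E] [InnerProductSpace 𝕜 E]
    [FiniteDimensional 𝕜 E] (f g : M →ₗ[𝕜] E) (h : ∀ x, ‖f x‖ = ‖g x‖) :
    ∃ T : E →ₗᵢ[𝕜] E, ∀ x, T (f x) = g x := by
  have hker : LinearMap.ker f ≤ LinearMap.ker g := fun x hx => by
    rw [LinearMap.mem_ker, ← norm_eq_zero, ← h, hx, norm_zero]
  let L : LinearMap.range f →ₗ[𝕜] E :=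
    (LinearMap.ker f).liftQ g hker ∘ₗ f.quotKerEquivRange.symm
  have hL : ∀ x, L ⟨f x, LinearMap.mem_range_self f x⟩ = g x := fun x => by
    simp [L, f.quotKerEquivRange_symm_apply_image x]
  let L' : LinearMap.range f →ₗᵢ[𝕜] E :=
    ⟨L, by rintro ⟨_, x, rfl⟩; exact (congrArg norm (hL x)).trans (h x).symm⟩
  exact ⟨L'.extend, fun x =>
    (L'.extend_apply ⟨f x, LinearMap.mem_range_self f x⟩).trans (hL x)⟩

theorem Matrix.exists_mem_unitaryGroup_mul_eq_of_conjTranspose_mul_self_eq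
    {𝕜 ι ν : Type*} [RCLike 𝕜] [Fintype ι] [DecidableEq ι] [Fintype ν] [DecidableEq ν]
    {A B : Matrix ι ν 𝕜} (h : Aᴴ * A = Bᴴ * B) :
    ∃ R ∈ unitaryGroup ι 𝕜, B = R * A := by
  have inner_toEuclideanLin_self (M : Matrix ι ν 𝕜) (x) :
      inner 𝕜 (toEuclideanLin M x) (toEuclideanLin M x)
        = inner 𝕜 x (toEuclideanLin (Mᴴ * M) x) := by
    rw [toLpLin_mul_same, LinearMap.comp_apply, toEuclideanLin_conjTranspose_eq_adjoint,
      LinearMap.adjoint_inner_right]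
  obtain ⟨T, hT⟩ := LinearMap.exists_linearIsometry_comp_eq_of_norm_map_eq
    (toEuclideanLin A) (toEuclideanLin B) fun x => by
      rw [@norm_eq_sqrt_re_inner 𝕜, @norm_eq_sqrt_re_inner 𝕜, inner_toEuclideanLin_self,
        inner_toEuclideanLin_self, h]
  refine ⟨toEuclideanLin.symm T.toLinearMap, ?_, toEuclideanLin.injective ?_⟩
  · rw [mem_unitaryGroup_iff', star_eq_conjTranspose]
    apply toEuclideanLin.injective
    rw [toLpLin_mul_same, toEuclideanLin_conjTranspose_eq_adjoint, LinearEquiv.apply_symm_apply,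
      T.adjoint_comp_self', toLpLin_one]
  · ext1 x
    rw [toLpLin_mul_same, LinearMap.comp_apply, LinearEquiv.apply_symm_apply]
    exact (hT x).symm

theorem MeasurableEmbedding.map_map {α β γ : Type*} [MeasurableSpace α] [MeasurableSpace β]
    [MeasurableSpace γ] {μ : Measure α} {f : α → β} (hf : MeasurableEmbedding f) (g : β → γ) :
    (μ.map f).map g = μ.map (g ∘ f) := by
  by_cases hg : AEMeasurable g (μ.map f)
  · exact AEMeasurable.map_map_of_aemeasurable hg hf.measurable.aemeasurable
  · rw [Measure.map_of_not_aemeasurable hg,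
      Measure.map_of_not_aemeasurable (mt hf.aemeasurable_map_iff.mpr hg)]

theorem Matrix.measurable_mul_const {κ δ ε : Type*} [Fintype δ] (C : Matrix δ ε ℝ) :
    Measurable (fun W : Matrix κ δ ℝ => W * C) :=
  measurable_pi_lambda _ fun i => measurable_pi_lambda _ fun _ =>
    Finset.measurable_sum _ fun l _ =>
      ((measurable_pi_apply l).comp (measurable_pi_apply i)).mul_const _

def Matrix.mulRightMeasurableEquiv {κ δ : Type*} [Fintype δ] [DecidableEq δ]
    (U : (Matrix δ δ ℝ)ˣ) : Matrix κ δ ℝ ≃ᵐ Matrix κ δ ℝ where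
  toFun W := W * (U : Matrix δ δ ℝ)
  invFun W := W * (↑U⁻¹ : Matrix δ δ ℝ)
  left_inv W := by simp [Matrix.mul_assoc]
  right_inv W := by simp [Matrix.mul_assoc]
  measurable_toFun := measurable_mul_const _
  measurable_invFun := measurable_mul_const _

section GradientDescent

variable {α P κ δ ν : Type*} [CommRing α] [Fintype δ] [DecidableEq δ]

theorem Matrix.mul_transpose_mul_mul_cancel {R : Matrix δ δ α} (hR : Rᵀ * R = 1)
    (M : Matrix κ δ α) (X : Matrix δ ν α) : M * Rᵀ * (R * X) = M * X := by
  rw [Matrix.mul_assoc, ← Matrix.mul_assoc Rᵀ, hR, Matrix.one_mul]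

theorem gradientDescent_orthogonal_mul_data [Fintype ν] [Sub P] [SMul α P]
    (Dθ : P → Matrix κ ν α → P) (DZ : P → Matrix κ ν α → Matrix κ ν α) (η : α)
    (X : Matrix δ ν α) {R : Matrix δ δ α} (hR : Rᵀ * R = 1)
    {θ θ' : ℕ → P} {W W' : ℕ → Matrix κ δ α}
    (hθ : ∀ t, θ (t + 1) = θ t - η • Dθ (θ t) (W t * X))
    (hW : ∀ t, W (t + 1) = W t - η • (DZ (θ t) (W t * X) * Xᵀ))
    (hθ' : ∀ t, θ' (t + 1) = θ' t - η • Dθ (θ' t) (W' t * (R * X)))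
    (hW' : ∀ t, W' (t + 1) = W' t - η • (DZ (θ' t) (W' t * (R * X)) * (R * X)ᵀ))
    (hθ0 : θ' 0 = θ 0) (hW0 : W' 0 = W 0 * Rᵀ) (t : ℕ) :
    θ' t = θ t ∧ W' t = W t * Rᵀ := by
  induction t with
  | zero => exact ⟨hθ0, hW0⟩
  | succ t ih =>
    obtain ⟨ihθ, ihW⟩ := ih
    have hZ : W' t * (R * X) = W t * X := by rw [ihW, mul_transpose_mul_mul_cancel hR]
    refine ⟨by rw [hθ', hZ, ihθ, hθ], ?_⟩
    rw [hW', hZ, ihθ, ihW, hW, transpose_mul, Matrix.sub_mul, Matrix.smul_mul,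
      Matrix.mul_assoc]

end GradientDescent

theorem law_of_training_trajectory_depends_only_on_combined_gram_general
    (d n m k p q : ℕ) (η : ℝ)
    (μ : Measure (Matrix (Fin k) (Fin d) ℝ))
    (hiso : ∀ R : Matrix (Fin d) (Fin d) ℝ, Rᵀ * R = 1 →
      μ.map (fun W => W * R) = μ)
    (θ0 : Fin p → ℝ)
    -- `Dθ θ Z` is the gradient of `ℓ (·, Z)` at `θ` w.r.t. the Euclidean inner product
    (Dθ : (Fin p → ℝ) → Matrix (Fin k) (Fin n) ℝ → (Fin p → ℝ))
    -- `DZ θ Z` is the gradient of `ℓ (θ, ·)` at `Z` w.r.t. the Frobenius inner product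
    (DZ : (Fin p → ℝ) → Matrix (Fin k) (Fin n) ℝ → Matrix (Fin k) (Fin n) ℝ)
    -- the two combined datasets (train and test blocks)
    (Xtr Xtr' : Matrix (Fin d) (Fin n) ℝ)
    (Xte Xte' : Matrix (Fin d) (Fin m) ℝ)
    -- equal combined Gram matrices
    (hGram : (fromCols Xtr Xte)ᵀ * fromCols Xtr Xte
           = (fromCols Xtr' Xte')ᵀ * fromCols Xtr' Xte')
    -- the two gradient-descent trajectories, as functions of the random initialization
    (Θ Θ' : ℕ → Matrix (Fin k) (Fin d) ℝ → (Fin p → ℝ))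
    (Wf Wf' : ℕ → Matrix (Fin k) (Fin d) ℝ → Matrix (Fin k) (Fin d) ℝ)
    (hΘ0 : ∀ W0, Θ 0 W0 = θ0) (hWf0 : ∀ W0, Wf 0 W0 = W0)
    (hΘ0' : ∀ W0, Θ' 0 W0 = θ0) (hWf0' : ∀ W0, Wf' 0 W0 = W0)
    (hΘ : ∀ t W0, Θ (t + 1) W0 = Θ t W0 - η • Dθ (Θ t W0) (Wf t W0 * Xtr))
    (hWf : ∀ t W0, Wf (t + 1) W0
      = Wf t W0 - η • (DZ (Θ t W0) (Wf t W0 * Xtr) * Xtrᵀ))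
    (hΘ' : ∀ t W0, Θ' (t + 1) W0 = Θ' t W0 - η • Dθ (Θ' t W0) (Wf' t W0 * Xtr'))
    (hWf' : ∀ t W0, Wf' (t + 1) W0
      = Wf' t W0 - η • (DZ (Θ' t W0) (Wf' t W0 * Xtr') * Xtr'ᵀ))
    -- the readout map producing the (test) predictions
    (g : (Fin p → ℝ) → Matrix (Fin k) (Fin m) ℝ → Matrix (Fin q) (Fin m) ℝ) :
    ∀ t : ℕ,
      μ.map (fun W0 => (Θ t W0, Wf t W0 * fromCols Xtr Xte))
        = μ.map (fun W0 => (Θ' t W0, Wf' t W0 * fromCols Xtr' Xte')) ∧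
      μ.map (fun W0 => g (Θ t W0) (Wf t W0 * Xte))
        = μ.map (fun W0 => g (Θ' t W0) (Wf' t W0 * Xte')) := by
  obtain ⟨R, hRU, hRX⟩ := exists_mem_unitaryGroup_mul_eq_of_conjTranspose_mul_self_eq
    (A := fromCols Xtr Xte) (B := fromCols Xtr' Xte')
    (by simpa only [conjTranspose_eq_transpose_of_trivial] using hGram)
  rw [mul_fromCols] at hRX
  obtain ⟨rfl, rfl⟩ := fromCols_inj hRX
  have hR : Rᵀ * R = 1 := by
    simpa [star_eq_conjTranspose] using mem_unitaryGroup_iff'.mp hRU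
  have hRt : R * Rᵀ = 1 := by
    simpa [star_eq_conjTranspose] using mem_unitaryGroup_iff.mp hRU
  let e : Matrix (Fin k) (Fin d) ℝ ≃ᵐ Matrix (Fin k) (Fin d) ℝ :=
    mulRightMeasurableEquiv ⟨Rᵀ, R, hR, hRt⟩
  have he : μ.map e = μ := hiso Rᵀ (by rwa [transpose_transpose])
  have traj W0 := gradientDescent_orthogonal_mul_data Dθ DZ η Xtr hR
    (θ := (Θ · W0)) (θ' := (Θ' · (W0 * Rᵀ))) (W := (Wf · W0)) (W' := (Wf' · (W0 * Rᵀ)))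
    (hΘ · W0) (hWf · W0) (hΘ' · _) (hWf' · _) (by simp [hΘ0, hΘ0']) (by simp [hWf0, hWf0'])
  intro t
  constructor
  all_goals
    conv_rhs => rw [← he]
    rw [e.measurableEmbedding.map_map]
    congr 1
    funext W0
    simp [e, mulRightMeasurableEquiv, traj W0 t, ← mul_fromCols,
      mul_transpose_mul_mul_cancel hR]

/-- Train `f(X) = g_θ(W X)` by gradient descent
(`θ^{t+1} = θ^t − η ∇_θ ℓ(θ^t, W^t X_train)`,
`W^{t+1} = W^t − η (∇_Z ℓ)(θ^t, W^t X_train) X_trainᵀ`) with `W^0 ∼ μ` drawn from an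
isotropic (right-orthogonally invariant) probability measure and fixed `θ^0`.  For the
combined data matrix `X = [X_train, X_test]`, the law of `(θ^t, W^t X)` — the deeper
weights together with the combined train-and-test first-layer activations — is the same
for any two combined datasets with equal combined Gram matrices `Xᵀ X = X'ᵀ X'`.
In particular, the law of the test predictions `g_{θ^t}(W^t X_test)` depends on the
inputs only through `K = Xᵀ X` (and the training labels, which are fixed inside `ℓ`). -/
theorem law_of_training_trajectory_depends_only_on_combined_gram
    (d n m k p q : ℕ) (η : ℝ) (hη : 0 < η)
    (μ : Measure (Matrix (Fin k) (Fin d) ℝ)) [IsProbabilityMeasure μ]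
    (hiso : ∀ R : Matrix (Fin d) (Fin d) ℝ, Rᵀ * R = 1 →
      μ.map (fun W => W * R) = μ)
    (θ0 : Fin p → ℝ)
    (ℓ : (Fin p → ℝ) → Matrix (Fin k) (Fin n) ℝ → ℝ)
    (hdiff : ∀ θ Z, Differentiable ℝ (fun θ' => ℓ θ' Z) ∧
      Differentiable ℝ (fun Z' => ℓ θ Z'))
    -- `Dθ θ Z` is the gradient of `ℓ (·, Z)` at `θ` w.r.t. the Euclidean inner product
    (Dθ : (Fin p → ℝ) → Matrix (Fin k) (Fin n) ℝ → (Fin p → ℝ))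
    (hDθ : ∀ θ Z v, fderiv ℝ (fun θ' => ℓ θ' Z) θ v = Dθ θ Z ⬝ᵥ v)
    -- `DZ θ Z` is the gradient of `ℓ (θ, ·)` at `Z` w.r.t. the Frobenius inner product
    (DZ : (Fin p → ℝ) → Matrix (Fin k) (Fin n) ℝ → Matrix (Fin k) (Fin n) ℝ)
    (hDZ : ∀ θ Z H, fderiv ℝ (fun Z' => ℓ θ Z') Z H = ((DZ θ Z)ᵀ * H).trace)
    -- the two combined datasets (train and test blocks)
    (Xtr Xtr' : Matrix (Fin d) (Fin n) ℝ)
    (Xte Xte' : Matrix (Fin d) (Fin m) ℝ)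
    -- equal combined Gram matrices
    (hGram : (fromCols Xtr Xte)ᵀ * fromCols Xtr Xte
           = (fromCols Xtr' Xte')ᵀ * fromCols Xtr' Xte')
    -- the two gradient-descent trajectories, as functions of the random initialization
    (Θ Θ' : ℕ → Matrix (Fin k) (Fin d) ℝ → (Fin p → ℝ))
    (Wf Wf' : ℕ → Matrix (Fin k) (Fin d) ℝ → Matrix (Fin k) (Fin d) ℝ)
    (hΘ0 : ∀ W0, Θ 0 W0 = θ0) (hWf0 : ∀ W0, Wf 0 W0 = W0)
    (hΘ0' : ∀ W0, Θ' 0 W0 = θ0) (hWf0' : ∀ W0, Wf' 0 W0 = W0)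
    (hΘ : ∀ t W0, Θ (t + 1) W0 = Θ t W0 - η • Dθ (Θ t W0) (Wf t W0 * Xtr))
    (hWf : ∀ t W0, Wf (t + 1) W0
      = Wf t W0 - η • (DZ (Θ t W0) (Wf t W0 * Xtr) * Xtrᵀ))
    (hΘ' : ∀ t W0, Θ' (t + 1) W0 = Θ' t W0 - η • Dθ (Θ' t W0) (Wf' t W0 * Xtr'))
    (hWf' : ∀ t W0, Wf' (t + 1) W0
      = Wf' t W0 - η • (DZ (Θ' t W0) (Wf' t W0 * Xtr') * Xtr'ᵀ))
    -- the readout map producing the (test) predictions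
    (g : (Fin p → ℝ) → Matrix (Fin k) (Fin m) ℝ → Matrix (Fin q) (Fin m) ℝ) :
    ∀ t : ℕ,
      μ.map (fun W0 => (Θ t W0, Wf t W0 * fromCols Xtr Xte))
        = μ.map (fun W0 => (Θ' t W0, Wf' t W0 * fromCols Xtr' Xte')) ∧
      μ.map (fun W0 => g (Θ t W0) (Wf t W0 * Xte))
        = μ.map (fun W0 => g (Θ' t W0) (Wf' t W0 * Xte')) :=
  law_of_training_trajectory_depends_only_on_combined_gram_general d n m k p q η μ hiso θ0 Dθ DZ Xtr
    Xtr' Xte Xte' hGram Θ Θ' Wf Wf' hΘ0 hWf0 hΘ0' hWf0' hΘ hWf hΘ' hWf' g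
end

section
/- Let X_train ∈ ℝ^{d×n} satisfy K_train := X_train^⊤ X_train = I_n (train-whitened data with n ≤ d), and let X_test ∈ ℝ^{d×m}. Let the first-layer weights evolve by W^{t+1} = W^t − η G^t X_train^⊤ for arbitrary matrices G^t ∈ ℝ^{k×n}. Then for all t ≥ 0 the test activations are obtained from the training activations by interpolation through the mixed second moment matrix: W^t X_test − W^0 X_test = (W^t X_train − W^0 X_train) K_{train×test}, where K_{train×test} = X_train^⊤ X_test. -/
open Matrix

/-! Each gradient step moves `W` by a matrix of the form `· * X_trainᵀ`, so the total
displacement is `A * X_trainᵀ` with `A = -η ∑_{s<t} G^s`. Whitening makes `X_trainᵀ` a left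
inverse of `X_train`, hence `A` is recovered as the displacement applied to `X_train`, and
applying the displacement to `X_test` gives `A * (X_trainᵀ * X_test)`. -/

section

variable {R ι κ ν μ : Type*} [CommRing R] [Fintype ν]

theorem sub_eq_neg_sum_mul_of_forall_succ_eq (η : R) (B : Matrix ν κ R)
    (W : ℕ → Matrix ι κ R) (G : ℕ → Matrix ι ν R)
    (hW : ∀ t, W (t + 1) = W t - η • (G t * B)) (t : ℕ) :
    W t - W 0 = -(η • ∑ s ∈ Finset.range t, G s) * B := by
  induction t with
  | zero => simp
  | succ t ih =>
    rw [hW t, Finset.sum_range_succ, smul_add, neg_add, Matrix.add_mul, ← ih,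
      Matrix.neg_mul, Matrix.smul_mul]
    abel

theorem mul_eq_mul_mul_of_mul_eq_one [Fintype κ] [DecidableEq ν] {L : Matrix ν κ R} {X : Matrix κ ν R}
    (hLX : L * X = 1) (A : Matrix ι ν R) (Y : Matrix κ μ R) :
    A * L * Y = (A * L * X) * (L * Y) := by
  rw [Matrix.mul_assoc A L X, hLX, Matrix.mul_one, Matrix.mul_assoc]

end

/-- For train-whitened data (`K_train = X_trainᵀ X_train = I_n`,
possible when `n ≤ d`), under the gradient-descent first-layer update
`W^{t+1} = W^t − η G^t X_trainᵀ`, the change in the test activations is obtained from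
the change in the training activations by interpolation through the mixed second moment
matrix: `W^t X_test − W^0 X_test = (W^t X_train − W^0 X_train) K_{train×test}` with
`K_{train×test} = X_trainᵀ X_test`. -/
theorem test_activations_interpolate_training_activations
    (d n m k : ℕ) (η : ℝ)
    (Xtr : Matrix (Fin d) (Fin n) ℝ)
    (Xte : Matrix (Fin d) (Fin m) ℝ)
    (hwhite : Xtrᵀ * Xtr = 1)
    (W : ℕ → Matrix (Fin k) (Fin d) ℝ)
    (G : ℕ → Matrix (Fin k) (Fin n) ℝ)
    (hW : ∀ t, W (t + 1) = W t - η • (G t * Xtrᵀ)) :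
    ∀ t, W t * Xte - W 0 * Xte = (W t * Xtr - W 0 * Xtr) * (Xtrᵀ * Xte) := by
  intro t
  rw [← Matrix.sub_mul, ← Matrix.sub_mul, sub_eq_neg_sum_mul_of_forall_succ_eq η Xtrᵀ W G hW t]
  exact mul_eq_mul_mul_of_mul_eq_one hwhite _ Xte
end

section
/- Let X ∈ ℝ^{d×n}, Y ∈ ℝ^{k×n}, F = X X^⊤ invertible, and let M ∈ ℝ^{d×d} be invertible with M^⊤ M = F^{−1}. Define the Newton's-method trajectory on unwhitened data by W_N^{t+1} = W_N^t − η (W_N^t X − Y) X^⊤ F^{−1} (a gradient step on the mean squared error preconditioned by the inverse Hessian F^{−1}), and the gradient descent trajectory on whitened data X̂ = M X by V^{t+1} = V^t − η (V^t X̂ − Y) X̂^⊤. If the initializations satisfy W_N^0 = V^0 M (so that both models have identical initial outputs), then W_N^t = V^t M for all t ≥ 0; in particular, for every input x and every step t, the Newton-trained model and the whitened-data gradient-descent model make identical predictions: W_N^t x = V^t (M x). Thus Newton's method on a linear least squares problem is equivalent to gradient descent on whitened data. -/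
open Matrix

/-- Newton's method on a linear least squares problem is equivalent
to gradient descent on whitened data.  With `F = X Xᵀ` invertible and `M` invertible
satisfying `Mᵀ M = F⁻¹`, define the Newton trajectory on raw data
`W_N^{t+1} = W_N^t − η (W_N^t X − Y) Xᵀ F⁻¹` and the gradient-descent trajectory on
whitened data `X̂ = M X`, `V^{t+1} = V^t − η (V^t X̂ − Y) X̂ᵀ`.  If `W_N^0 = V^0 M`
(identical initial outputs), then `W_N^t = V^t M` for all `t`, and in particular both
models make identical predictions: `W_N^t x = V^t (M x)` for every input `x`. -/
theorem newton_equals_gd_on_whitened_data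
    (d n k : ℕ) (η : ℝ)
    (X : Matrix (Fin d) (Fin n) ℝ)
    (Y : Matrix (Fin k) (Fin n) ℝ)
    (hF : IsUnit (X * Xᵀ))
    (M : Matrix (Fin d) (Fin d) ℝ)
    (hM : IsUnit M)
    (hMF : Mᵀ * M = (X * Xᵀ)⁻¹)
    (WN V : ℕ → Matrix (Fin k) (Fin d) ℝ)
    (hWN : ∀ t, WN (t + 1) = WN t - η • ((WN t * X - Y) * Xᵀ * (X * Xᵀ)⁻¹))
    (hV : ∀ t, V (t + 1) = V t - η • ((V t * (M * X) - Y) * (M * X)ᵀ))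
    (h0 : WN 0 = V 0 * M) :
    ∀ t, WN t = V t * M ∧ ∀ x : Fin d → ℝ, (WN t) *ᵥ x = (V t) *ᵥ (M *ᵥ x) := by
  have key : ∀ t, WN t = V t * M := by
    intro t
    induction t with
    | zero => exact h0
    | succ t ih =>
      rw [hWN, hV, ih, ← hMF]
      simp only [Matrix.sub_mul, Matrix.smul_mul, transpose_mul]
      congr 1
      congr 1
      simp [Matrix.mul_assoc]
  intro t
  refine ⟨key t, fun x => ?_⟩
  rw [key t, ← mulVec_mulVec]
end
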